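/- For every integer n ≥ 1, the quartic t^4 + n t^3 − (2n+1) t^2 + n t + 1 has no factorization over ℤ into two monic quadratics of the form (t^2 + a t + 1)(t^2 + b t + 1) or (t^2 + a t − 1)(t^2 + b t − 1) with a, b ∈ ℤ. -/

import Mathlib

/-!
Evaluate at `t = 1` and `t = -1`, where `Δ_n` takes the values `1` and `1 - 4n`.
For `(t² + a t + 1)(t² + b t + 1)` the value at `1` is `(a + 2)(b + 2) = 1`, forcing `a = b`,
so the value at `-1` is the square `(2 - a)²`, which cannot equal the negative `1 - 4n`.
For `(t² + a t - 1)(t² + b t - 1)` both values equal `a b`, which forces `1 = 1 - 4n`.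
-/

open Polynomial

noncomputable def delta (n : ℤ) : ℤ[X] :=
  X ^ 4 + C n * X ^ 3 - C (2 * n + 1) * X ^ 2 + C n * X + 1

lemma delta_eval_one (n : ℤ) : (delta n).eval 1 = 1 := by
  simp only [delta, eval_add, eval_sub, eval_mul, eval_pow, eval_C, eval_X, eval_one]
  ring

lemma delta_eval_neg_one (n : ℤ) : (delta n).eval (-1) = 1 - 4 * n := by
  simp only [delta, eval_add, eval_sub, eval_mul, eval_pow, eval_C, eval_X, eval_one]
  ring

lemma delta_ne_mul_of_const_one {n : ℤ} (hn : 1 ≤ n) (a b : ℤ) :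
    delta n ≠ (X ^ 2 + C a * X + 1) * (X ^ 2 + C b * X + 1) := by
  intro h
  have at_one := delta_eval_one n
  have at_neg_one := delta_eval_neg_one n
  rw [h] at at_one at_neg_one
  simp only [eval_add, eval_mul, eval_pow, eval_C, eval_X, eval_one] at at_one at_neg_one
  have hab : a + 2 = b + 2 := Int.eq_of_mul_eq_one (by linear_combination at_one)
  obtain rfl : a = b := by omega
  nlinarith [sq_nonneg (2 - a)]

lemma delta_ne_mul_of_const_neg_one {n : ℤ} (hn : n ≠ 0) (a b : ℤ) :
    delta n ≠ (X ^ 2 + C a * X - 1) * (X ^ 2 + C b * X - 1) := by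
  intro h
  have at_one := delta_eval_one n
  have at_neg_one := delta_eval_neg_one n
  rw [h] at at_one at_neg_one
  simp only [eval_sub, eval_add, eval_mul, eval_pow, eval_C, eval_X, eval_one] at at_one at_neg_one
  have : 4 * n = 0 := by linear_combination at_neg_one - at_one
  omega

theorem delta_no_quadratic_factorization (n : ℤ) (hn : 1 ≤ n) (a b : ℤ) :
    (X ^ 4 + C (n : ℤ) * X ^ 3 - C (2 * n + 1 : ℤ) * X ^ 2
        + C (n : ℤ) * X + 1 : Polynomial ℤ)
      ≠ (X ^ 2 + C a * X + 1) * (X ^ 2 + C b * X + 1) ∧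
    (X ^ 4 + C (n : ℤ) * X ^ 3 - C (2 * n + 1 : ℤ) * X ^ 2
        + C (n : ℤ) * X + 1 : Polynomial ℤ)
      ≠ (X ^ 2 + C a * X - 1) * (X ^ 2 + C b * X - 1) :=
  ⟨delta_ne_mul_of_const_one hn a b, delta_ne_mul_of_const_neg_one (by omega) a b⟩
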